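/- arXiv:2302.02068 — 3 statements merged into one kernel-verified Lean document; each statement's English description precedes it below -/
import Mathlib

section
/- Let L₁ and L₂ be subgroups of a free abelian group M of finite rank, and let L₁^sat and L₂^sat denote their saturations in M. Then there is a short exact sequence 0 → (L₁^sat ∩ L₂^sat)/(L₁ ∩ L₂) → L₁^sat/L₁ ⊕ L₂^sat/L₂ → (L₁^sat + L₂^sat)/(L₁ + L₂) → 0. In particular, if all quotients are finite, then |(L₁^sat + L₂^sat)/(L₁ + L₂)| · |(L₁^sat ∩ L₂^sat)/(L₁ ∩ L₂)| = |L₁^sat/L₁| · |L₂^sat/L₂|. -/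
/-!
The sequence `0 → (S₁ ⊓ S₂)/(L₁ ⊓ L₂) → S₁/L₁ × S₂/L₂ → (S₁ ⊔ S₂)/(L₁ ⊔ L₂) → 0` is exact for
any subgroups `L₁ ≤ S₁`, `L₂ ≤ S₂` of an abelian group; here `Sᵢ = Lᵢˢᵃᵗ`. The only real point is
exactness in the middle: if `a - b = l₁ + l₂` with `lᵢ ∈ Lᵢ`, then `a - l₁ = b + l₂` lies in
`S₁ ⊓ S₂` and maps to the class of `(a, b)`. The cardinality identity is then the
multiplicativity of `Nat.card` along a short exact sequence.
-/

def saturation {M : Type*} [AddCommGroup M] (L : AddSubgroup M) : AddSubgroup M where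
  carrier := {m | ∃ k : ℤ, k ≠ 0 ∧ k • m ∈ L}
  zero_mem' := ⟨1, one_ne_zero, by simpa using L.zero_mem⟩
  add_mem' := by
    rintro a b ⟨k, hk, hka⟩ ⟨l, hl, hlb⟩
    refine ⟨k * l, mul_ne_zero hk hl, ?_⟩
    rw [smul_add]
    refine L.add_mem ?_ ?_
    · rw [mul_comm, mul_smul]; exact L.zsmul_mem hka l
    · rw [mul_smul]; exact L.zsmul_mem hlb k
  neg_mem' := by
    rintro a ⟨k, hk, hka⟩
    exact ⟨k, hk, by rw [smul_neg]; exact L.neg_mem hka⟩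

theorem le_saturation {M : Type*} [AddCommGroup M] (L : AddSubgroup M) : L ≤ saturation L :=
  fun m hm => ⟨1, one_ne_zero, by simpa using hm⟩

theorem AddMonoidHom.card_mul_card_eq_card_of_exact {A B C : Type*} [AddGroup A] [AddGroup B]
    [AddGroup C] {f : A →+ B} {g : B →+ C} (hf : Function.Injective f)
    (hg : Function.Surjective g) (hfg : Function.Exact f g) :
    Nat.card C * Nat.card A = Nat.card B := by
  rw [AddSubgroup.card_eq_card_quotient_mul_card_addSubgroup g.ker,
    Nat.card_congr (QuotientAddGroup.quotientKerEquivOfSurjective g hg).toEquiv,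
    AddMonoidHom.exact_iff.mp hfg, Nat.card_congr (AddMonoidHom.ofInjective hf).toEquiv]

namespace QuotientAddGroup

open AddSubgroup hiding map

variable {M : Type*} [AddCommGroup M] (L₁ L₂ S₁ S₂ : AddSubgroup M)

def quotientInfToProd :
    ↥(S₁ ⊓ S₂) ⧸ (L₁ ⊓ L₂).addSubgroupOf (S₁ ⊓ S₂) →+
      (↥S₁ ⧸ L₁.addSubgroupOf S₁) × (↥S₂ ⧸ L₂.addSubgroupOf S₂) :=
  (map _ (L₁.addSubgroupOf S₁) (inclusion inf_le_left)
      fun _ hx => (show _ ∈ L₁ ⊓ L₂ from hx).1).prod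
    (map _ (L₂.addSubgroupOf S₂) (inclusion inf_le_right)
      fun _ hx => (show _ ∈ L₁ ⊓ L₂ from hx).2)

def quotientProdToSup :
    (↥S₁ ⧸ L₁.addSubgroupOf S₁) × (↥S₂ ⧸ L₂.addSubgroupOf S₂) →+
      ↥(S₁ ⊔ S₂) ⧸ (L₁ ⊔ L₂).addSubgroupOf (S₁ ⊔ S₂) :=
  (map (L₁.addSubgroupOf S₁) ((L₁ ⊔ L₂).addSubgroupOf (S₁ ⊔ S₂)) (inclusion le_sup_left)
      fun _ hx => mem_sup_left (S := L₁) (T := L₂) hx).coprod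
    (-map (L₂.addSubgroupOf S₂) ((L₁ ⊔ L₂).addSubgroupOf (S₁ ⊔ S₂)) (inclusion le_sup_right)
      fun _ hx => mem_sup_right (S := L₁) (T := L₂) hx)

@[simp]
theorem quotientInfToProd_mk (x : ↥(S₁ ⊓ S₂)) :
    quotientInfToProd L₁ L₂ S₁ S₂ x =
      (mk (inclusion inf_le_left x), mk (inclusion inf_le_right x)) :=
  rfl

@[simp]
theorem quotientProdToSup_mk (a : S₁) (b : S₂) :
    quotientProdToSup L₁ L₂ S₁ S₂ (mk a, mk b) =
      mk (inclusion le_sup_left a - inclusion le_sup_right b) := by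
  rw [sub_eq_add_neg, mk_add, mk_neg]
  rfl

theorem injective_quotientInfToProd : Function.Injective (quotientInfToProd L₁ L₂ S₁ S₂) := by
  rw [injective_iff_map_eq_zero]
  intro x hx
  induction x using induction_on with | H x
  simp only [quotientInfToProd_mk, Prod.mk_eq_zero, eq_zero_iff] at hx
  exact (eq_zero_iff x).mpr hx

theorem surjective_quotientProdToSup : Function.Surjective (quotientProdToSup L₁ L₂ S₁ S₂) := by
  intro x
  induction x using induction_on with | H x
  obtain ⟨a, ha, b, hb, hab⟩ := mem_sup.mp x.2
  refine ⟨(mk ⟨a, ha⟩, mk ⟨-b, neg_mem hb⟩), ?_⟩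
  rw [quotientProdToSup_mk]
  congr 1
  ext
  simp [hab]

theorem exact_quotientInfToProd_quotientProdToSup (h₁ : L₁ ≤ S₁) (h₂ : L₂ ≤ S₂) :
    Function.Exact (quotientInfToProd L₁ L₂ S₁ S₂) (quotientProdToSup L₁ L₂ S₁ S₂) := by
  intro y
  constructor
  · obtain ⟨y₁, y₂⟩ := y
    induction y₁ using induction_on with | H a
    induction y₂ using induction_on with | H b
    rw [quotientProdToSup_mk, eq_zero_iff, mem_addSubgroupOf, coe_sub, coe_inclusion,
      coe_inclusion]
    intro hab
    obtain ⟨l₁, hl₁, l₂, hl₂, hl⟩ := mem_sup.mp hab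
    have hc : (a : M) - l₁ = b + l₂ := by rw [eq_add_of_sub_eq hl.symm]; abel
    have hc₂ : (a : M) - l₁ ∈ S₂ := hc ▸ add_mem b.2 (h₂ hl₂)
    refine ⟨mk ⟨a - l₁, mem_inf.mpr ⟨sub_mem a.2 (h₁ hl₁), hc₂⟩⟩, ?_⟩
    rw [quotientInfToProd_mk, Prod.ext_iff]
    simp only [eq_iff_sub_mem, mem_addSubgroupOf, coe_sub, coe_inclusion]
    exact ⟨by simpa using neg_mem hl₁, by simpa [hc] using hl₂⟩
  · rintro ⟨x, rfl⟩
    induction x using induction_on with | H x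
    rw [quotientInfToProd_mk, quotientProdToSup_mk, eq_zero_iff, mem_addSubgroupOf]
    simp

end QuotientAddGroup

theorem stmt2_general (M : Type*) [AddCommGroup M]
    (L₁ L₂ : AddSubgroup M) :
    (∃ (f : (↥(saturation L₁ ⊓ saturation L₂) ⧸
              ((L₁ ⊓ L₂).addSubgroupOf (saturation L₁ ⊓ saturation L₂))) →+
            ((↥(saturation L₁) ⧸ (L₁.addSubgroupOf (saturation L₁))) ×
             (↥(saturation L₂) ⧸ (L₂.addSubgroupOf (saturation L₂)))))
       (g : ((↥(saturation L₁) ⧸ (L₁.addSubgroupOf (saturation L₁))) ×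
             (↥(saturation L₂) ⧸ (L₂.addSubgroupOf (saturation L₂)))) →+
            (↥(saturation L₁ ⊔ saturation L₂) ⧸
              ((L₁ ⊔ L₂).addSubgroupOf (saturation L₁ ⊔ saturation L₂)))),
       Function.Injective f ∧ Function.Surjective g ∧ Function.Exact f g) ∧
    (Finite (↥(saturation L₁ ⊓ saturation L₂) ⧸
        ((L₁ ⊓ L₂).addSubgroupOf (saturation L₁ ⊓ saturation L₂))) →
     Finite (↥(saturation L₁) ⧸ (L₁.addSubgroupOf (saturation L₁))) →
     Finite (↥(saturation L₂) ⧸ (L₂.addSubgroupOf (saturation L₂))) →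
     Finite (↥(saturation L₁ ⊔ saturation L₂) ⧸
        ((L₁ ⊔ L₂).addSubgroupOf (saturation L₁ ⊔ saturation L₂))) →
     Nat.card (↥(saturation L₁ ⊔ saturation L₂) ⧸
         ((L₁ ⊔ L₂).addSubgroupOf (saturation L₁ ⊔ saturation L₂))) *
       Nat.card (↥(saturation L₁ ⊓ saturation L₂) ⧸
         ((L₁ ⊓ L₂).addSubgroupOf (saturation L₁ ⊓ saturation L₂))) =
     Nat.card (↥(saturation L₁) ⧸ (L₁.addSubgroupOf (saturation L₁))) *
       Nat.card (↥(saturation L₂) ⧸ (L₂.addSubgroupOf (saturation L₂)))) := by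
  have hf := QuotientAddGroup.injective_quotientInfToProd L₁ L₂ (saturation L₁) (saturation L₂)
  have hg := QuotientAddGroup.surjective_quotientProdToSup L₁ L₂ (saturation L₁) (saturation L₂)
  have hfg := QuotientAddGroup.exact_quotientInfToProd_quotientProdToSup L₁ L₂ _ _
    (le_saturation L₁) (le_saturation L₂)
  refine ⟨⟨_, _, hf, hg, hfg⟩, fun _ _ _ _ => ?_⟩
  exact (AddMonoidHom.card_mul_card_eq_card_of_exact hf hg hfg).trans (Nat.card_prod _ _)

/-- for subgroups `L₁, L₂` of a finite-rank free abelian group `M`, there is a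
short exact sequence
`0 → (L₁ˢᵃᵗ ∩ L₂ˢᵃᵗ)/(L₁ ∩ L₂) → L₁ˢᵃᵗ/L₁ ⊕ L₂ˢᵃᵗ/L₂ → (L₁ˢᵃᵗ + L₂ˢᵃᵗ)/(L₁ + L₂) → 0`;
in particular, if all four quotients are finite,
`|(L₁ˢᵃᵗ+L₂ˢᵃᵗ)/(L₁+L₂)| * |(L₁ˢᵃᵗ∩L₂ˢᵃᵗ)/(L₁∩L₂)| = |L₁ˢᵃᵗ/L₁| * |L₂ˢᵃᵗ/L₂|`. -/
theorem stmt2 (M : Type*) [AddCommGroup M] [Module.Free ℤ M] [Module.Finite ℤ M]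
    (L₁ L₂ : AddSubgroup M) :
    (∃ (f : (↥(saturation L₁ ⊓ saturation L₂) ⧸
              ((L₁ ⊓ L₂).addSubgroupOf (saturation L₁ ⊓ saturation L₂))) →+
            ((↥(saturation L₁) ⧸ (L₁.addSubgroupOf (saturation L₁))) ×
             (↥(saturation L₂) ⧸ (L₂.addSubgroupOf (saturation L₂)))))
       (g : ((↥(saturation L₁) ⧸ (L₁.addSubgroupOf (saturation L₁))) ×
             (↥(saturation L₂) ⧸ (L₂.addSubgroupOf (saturation L₂)))) →+
            (↥(saturation L₁ ⊔ saturation L₂) ⧸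
              ((L₁ ⊔ L₂).addSubgroupOf (saturation L₁ ⊔ saturation L₂)))),
       Function.Injective f ∧ Function.Surjective g ∧ Function.Exact f g) ∧
    (Finite (↥(saturation L₁ ⊓ saturation L₂) ⧸
        ((L₁ ⊓ L₂).addSubgroupOf (saturation L₁ ⊓ saturation L₂))) →
     Finite (↥(saturation L₁) ⧸ (L₁.addSubgroupOf (saturation L₁))) →
     Finite (↥(saturation L₂) ⧸ (L₂.addSubgroupOf (saturation L₂))) →
     Finite (↥(saturation L₁ ⊔ saturation L₂) ⧸
        ((L₁ ⊔ L₂).addSubgroupOf (saturation L₁ ⊔ saturation L₂))) →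
     Nat.card (↥(saturation L₁ ⊔ saturation L₂) ⧸
         ((L₁ ⊔ L₂).addSubgroupOf (saturation L₁ ⊔ saturation L₂))) *
       Nat.card (↥(saturation L₁ ⊓ saturation L₂) ⧸
         ((L₁ ⊓ L₂).addSubgroupOf (saturation L₁ ⊓ saturation L₂))) =
     Nat.card (↥(saturation L₁) ⧸ (L₁.addSubgroupOf (saturation L₁))) *
       Nat.card (↥(saturation L₂) ⧸ (L₂.addSubgroupOf (saturation L₂)))) :=
  stmt2_general M L₁ L₂
end

section
/- Let M be a free abelian group of rank d, and L₁, L₂ ⊆ M subgroups of rank d−1 with rank(L₁+L₂) = d. With M̄ = M/(L₁^sat ∩ L₂^sat) a rank-2 free abelian group, and ū₁, ū₂ ∈ M̄ nonzero elements lying in the rank-1 subgroups (L₁^sat)/(L₁^sat∩L₂^sat) and (L₂^sat)/(L₁^sat∩L₂^sat) respectively, one has |M/(L₁^sat + L₂^sat)| = |ū₁ ∧ ū₂| / (|ū₁| · |ū₂|), where ū₁ ∧ ū₂ is the determinant in M̄ ≅ ℤ² and |·| denotes divisibility. -/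
/-!
Push everything to `ℤ²` along `f : M → M ⧸ (L₁ˢᵃᵗ ⊓ L₂ˢᵃᵗ) ≃ ℤ²`. The images `Wᵢ` of the saturations
are saturated, meet only in `0`, and are nonzero. A saturated subgroup of `ℤ²` containing two
non-collinear vectors is all of `ℤ²`, so each `Wᵢ` is the line `ℤ vᵢ` through a primitive vector,
and `f uᵢ = |f uᵢ| • vᵢ`. Finally `ℤ v₁ + ℤ v₂` is the preimage of `(v₁ ∧ v₂) ℤ` under the
surjection `v₁ ∧ · : ℤ² → ℤ` whose kernel is `ℤ v₁`, so its index is `|v₁ ∧ v₂|`.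
-/

/-- The divisibility of an element `x` of an abelian group: the largest `n : ℕ` such that
`x = n • y` for some `y` (via `sSup`). -/
noncomputable def divisib {M : Type*} [AddCommGroup M] (x : M) : ℕ :=
  sSup {n : ℕ | ∃ y : M, x = (n : ℤ) • y}

open AddSubgroup

section Saturation

variable {G H : Type*} [AddCommGroup G] [AddCommGroup H]

lemma saturation_saturation_le (L : AddSubgroup G) : saturation (saturation L) ≤ saturation L := by
  rintro m ⟨k, hk, j, hj, hjkm⟩
  exact ⟨j * k, mul_ne_zero hj hk, by rwa [mul_zsmul]⟩

lemma saturation_map_le {f : G →+ H} (hf : Function.Surjective f) {S : AddSubgroup G}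
    (hker : f.ker ≤ S) (hS : saturation S ≤ S) : saturation (S.map f) ≤ S.map f := by
  rintro y ⟨k, hk, s, hs, hsy⟩
  obtain ⟨m, rfl⟩ := hf y
  have hdiff : k • m - s ∈ S := hker (by simp [AddMonoidHom.mem_ker, hsy])
  exact ⟨m, hS ⟨k, hk, by simpa using S.add_mem hdiff hs⟩, rfl⟩

lemma map_inf_map_eq_bot {f : G →+ H} {S₁ S₂ : AddSubgroup G} (hker : f.ker = S₁ ⊓ S₂) :
    S₁.map f ⊓ S₂.map f = ⊥ := by
  rw [eq_bot_iff]
  rintro y ⟨⟨a, ha, rfl⟩, b, hb, hba⟩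
  have hab : a - b ∈ S₁ ⊓ S₂ := hker ▸ by simp [AddMonoidHom.mem_ker, hba]
  have ha₂ : a ∈ S₂ := by simpa using S₂.add_mem hab.2 hb
  exact AddMonoidHom.mem_ker.mp (hker ▸ ⟨ha, ha₂⟩)

end Saturation

lemma divisib_addEquiv {G H : Type*} [AddCommGroup G] [AddCommGroup H] (e : G ≃+ H) (x : G) :
    divisib (e x) = divisib x := by
  unfold divisib
  congr 1
  ext n
  constructor
  · rintro ⟨y, hy⟩
    exact ⟨e.symm y, by simpa using congrArg e.symm hy⟩
  · rintro ⟨y, rfl⟩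
    exact ⟨e y, map_zsmul e _ _⟩

lemma Nat.sSup_setOf_dvd (a : ℕ) : sSup {n | n ∣ a} = a := by
  rcases Nat.eq_zero_or_pos a with rfl | ha
  -- every `n` divides `0`, and `sSup` of an unbounded set of naturals is `0`
  · exact Nat.sSup_of_not_bddAbove fun ⟨m, hm⟩ => by simpa using hm (dvd_zero (m + 1))
  · exact IsGreatest.csSup_eq ⟨dvd_rfl, fun n hn => Nat.le_of_dvd ha hn⟩

lemma exists_eq_smul_iff_dvd_gcd (x : Fin 2 → ℤ) (n : ℕ) :
    (∃ z : Fin 2 → ℤ, x = (n : ℤ) • z) ↔ n ∣ Int.gcd (x 0) (x 1) := by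
  rw [← Int.natCast_dvd_natCast, Int.dvd_coe_gcd_iff]
  constructor
  · rintro ⟨z, rfl⟩
    simp
  · rintro ⟨h0, h1⟩
    refine ⟨fun i => x i / n, funext fun i => ?_⟩
    fin_cases i
    · exact (Int.mul_ediv_cancel' h0).symm
    · exact (Int.mul_ediv_cancel' h1).symm

lemma divisib_eq_gcd (x : Fin 2 → ℤ) : divisib x = Int.gcd (x 0) (x 1) := by
  simp only [divisib, exists_eq_smul_iff_dvd_gcd]
  exact Nat.sSup_setOf_dvd _

def wedge : (Fin 2 → ℤ) →ₗ[ℤ] (Fin 2 → ℤ) →ₗ[ℤ] ℤ :=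
  LinearMap.mk₂ ℤ (fun x y => x 0 * y 1 - x 1 * y 0)
    (fun _ _ _ => by simp only [Pi.add_apply]; ring)
    (fun _ _ _ => by simp only [Pi.smul_apply, smul_eq_mul]; ring)
    (fun _ _ _ => by simp only [Pi.add_apply]; ring)
    (fun _ _ _ => by simp only [Pi.smul_apply, smul_eq_mul]; ring)

@[simp]
lemma wedge_apply (x y : Fin 2 → ℤ) : wedge x y = x 0 * y 1 - x 1 * y 0 := rfl

@[simp]
lemma wedge_self (x : Fin 2 → ℤ) : wedge x x = 0 := by
  simp [mul_comm]

lemma wedge_smul_eq_sub (x y m : Fin 2 → ℤ) : wedge x y • m = wedge m y • x - wedge m x • y := by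
  refine funext <| Fin.forall_fin_two.2 ⟨?_, ?_⟩ <;>
    simp only [wedge_apply, Pi.smul_apply, Pi.sub_apply, smul_eq_mul] <;> ring

lemma wedge_eq_zero_iff_mem_zmultiples {v y : Fin 2 → ℤ} (hv : IsCoprime (v 0) (v 1)) :
    wedge v y = 0 ↔ y ∈ zmultiples v := by
  constructor
  · intro h
    obtain ⟨a, b, hab⟩ := hv
    rw [wedge_apply] at h
    refine ⟨a * y 0 + b * y 1, funext <| Fin.forall_fin_two.2 ⟨?_, ?_⟩⟩
    · simp only [Pi.smul_apply, smul_eq_mul]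
      linear_combination y 0 * hab + b * h
    · simp only [Pi.smul_apply, smul_eq_mul]
      linear_combination y 1 * hab - a * h
  · rintro ⟨k, rfl⟩
    simp only [wedge_apply, Pi.smul_apply, smul_eq_mul]
    ring

lemma wedge_surjective {v : Fin 2 → ℤ} (hv : IsCoprime (v 0) (v 1)) :
    Function.Surjective (wedge v) := by
  obtain ⟨a, b, hab⟩ := hv
  intro n
  refine ⟨n • ![-b, a], ?_⟩
  simp only [map_zsmul, wedge_apply, Matrix.cons_val_zero, Matrix.cons_val_one, smul_eq_mul]
  linear_combination n * hab

lemma index_zmultiples_sup_zmultiples {v w : Fin 2 → ℤ} (hv : IsCoprime (v 0) (v 1)) :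
    (zmultiples v ⊔ zmultiples w).index = (wedge v w).natAbs := by
  have hsup : zmultiples v ⊔ zmultiples w =
      (zmultiples (wedge v w)).comap (wedge v).toAddMonoidHom := by
    refine le_antisymm (sup_le ?_ ?_) fun y ⟨k, hk⟩ => ?_
    · exact zmultiples_le.2 <| by
        simp only [mem_comap, LinearMap.toAddMonoidHom_coe, wedge_self, zero_mem]
    · exact zmultiples_le.2 <| mem_zmultiples _
    · have hyk : y - k • w ∈ zmultiples v := (wedge_eq_zero_iff_mem_zmultiples hv).1 <| by
        rw [map_sub, map_zsmul]
        exact sub_eq_zero.2 hk.symm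
      simpa using add_mem (mem_sup_left hyk) (mem_sup_right (zsmul_mem (mem_zmultiples w) k))
  rw [hsup, index_comap_of_surjective _ (wedge_surjective hv), Int.index_zmultiples]

lemma exists_isCoprime_smul_eq {x : Fin 2 → ℤ} (hx : x ≠ 0) :
    ∃ v : Fin 2 → ℤ, IsCoprime (v 0) (v 1) ∧ x = (Int.gcd (x 0) (x 1) : ℤ) • v := by
  have hpos : 0 < Int.gcd (x 0) (x 1) := Int.gcd_pos_iff.2 <| by
    by_contra! h
    exact hx (funext <| Fin.forall_fin_two.2 h)
  obtain ⟨a, b, hab, ha, hb⟩ := Int.exists_gcd_one hpos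
  refine ⟨![a, b], Int.isCoprime_iff_gcd_eq_one.2 hab, funext <| Fin.forall_fin_two.2 ⟨?_, ?_⟩⟩
  · simpa [mul_comm] using ha
  · simpa [mul_comm] using hb

section Saturated

variable {W : AddSubgroup (Fin 2 → ℤ)}

lemma eq_top_of_wedge_ne_zero (hW : saturation W ≤ W) {x y : Fin 2 → ℤ} (hx : x ∈ W) (hy : y ∈ W)
    (hxy : wedge x y ≠ 0) : W = ⊤ :=
  eq_top_iff.2 fun m _ => hW ⟨wedge x y, hxy, by
    rw [wedge_smul_eq_sub]
    exact W.sub_mem (zsmul_mem hx _) (zsmul_mem hy _)⟩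

lemma exists_isCoprime_eq_zmultiples (hW : saturation W ≤ W) {W' : AddSubgroup (Fin 2 → ℤ)}
    (hWW' : W ⊓ W' = ⊥) {x x' : Fin 2 → ℤ} (hx : x ∈ W) (hx' : x' ∈ W') (hx0 : x ≠ 0)
    (hx'0 : x' ≠ 0) :
    ∃ v : Fin 2 → ℤ, IsCoprime (v 0) (v 1) ∧ x = (divisib x : ℤ) • v ∧ W = zmultiples v := by
  obtain ⟨v, hv, hxv⟩ := exists_isCoprime_smul_eq hx0
  have hvW : v ∈ W := hW ⟨_, fun h => hx0 (by rw [hxv, h, zero_smul]), hxv ▸ hx⟩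
  have hcol : ∀ y ∈ W, wedge v y = 0 := by
    intro y hy
    by_contra hvy
    rw [eq_top_of_wedge_ne_zero hW hvW hy hvy, top_inf_eq] at hWW'
    exact hx'0 (mem_bot.1 (hWW' ▸ hx'))
  refine ⟨v, hv, by rwa [divisib_eq_gcd], le_antisymm ?_ (zmultiples_le.2 hvW)⟩
  exact fun y hy => (wedge_eq_zero_iff_mem_zmultiples hv).1 (hcol y hy)

end Saturated

theorem index_sup_mul_divisib_mul_divisib {W₁ W₂ : AddSubgroup (Fin 2 → ℤ)}
    (hW₁ : saturation W₁ ≤ W₁) (hW₂ : saturation W₂ ≤ W₂) (hW : W₁ ⊓ W₂ = ⊥)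
    {x₁ x₂ : Fin 2 → ℤ} (hx₁ : x₁ ∈ W₁) (hx₂ : x₂ ∈ W₂) (hx₁0 : x₁ ≠ 0) (hx₂0 : x₂ ≠ 0) :
    (W₁ ⊔ W₂).index * (divisib x₁ * divisib x₂) = (wedge x₁ x₂).natAbs := by
  obtain ⟨v₁, hv₁, hxv₁, rfl⟩ := exists_isCoprime_eq_zmultiples hW₁ hW hx₁ hx₂ hx₁0 hx₂0
  obtain ⟨v₂, -, hxv₂, rfl⟩ :=
    exists_isCoprime_eq_zmultiples hW₂ ((inf_comm _ _).trans hW) hx₂ hx₁ hx₂0 hx₁0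
  have hwedge : wedge x₁ x₂ = (divisib x₁ * divisib x₂ : ℕ) * wedge v₁ v₂ := by
    conv_lhs => rw [hxv₁, hxv₂]
    simp only [map_zsmul, LinearMap.smul_apply, smul_eq_mul, Nat.cast_mul]
    ring
  rw [index_zmultiples_sup_zmultiples hv₁, hwedge, Int.natAbs_mul, Int.natAbs_natCast, mul_comm]

theorem index_sup_mul_divisib_mul_divisib_of_ker_eq {G : Type*} [AddCommGroup G]
    {f : G →+ (Fin 2 → ℤ)} (hf : Function.Surjective f) {S₁ S₂ : AddSubgroup G}
    (hS₁ : saturation S₁ ≤ S₁) (hS₂ : saturation S₂ ≤ S₂) (hker : f.ker = S₁ ⊓ S₂)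
    {u₁ u₂ : G} (hu₁ : u₁ ∈ S₁) (hu₂ : u₂ ∈ S₂) (hfu₁ : f u₁ ≠ 0) (hfu₂ : f u₂ ≠ 0) :
    (S₁ ⊔ S₂).index * (divisib (f u₁) * divisib (f u₂)) = (wedge (f u₁) (f u₂)).natAbs := by
  rw [← index_map_eq _ hf (hker.trans_le (inf_le_left.trans le_sup_left)), AddSubgroup.map_sup]
  exact index_sup_mul_divisib_mul_divisib (saturation_map_le hf (hker.trans_le inf_le_left) hS₁)
    (saturation_map_le hf (hker.trans_le inf_le_right) hS₂) (map_inf_map_eq_bot hker)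
    (mem_map_of_mem f hu₁) (mem_map_of_mem f hu₂) hfu₁ hfu₂

theorem stmt8_general (M : Type*) [AddCommGroup M] [Module ℤ M]
    (L₁ L₂ : Submodule ℤ M)
    (u₁ u₂ : M)
    (hu₁ : u₁ ∈ saturation L₁.toAddSubgroup) (hu₂ : u₂ ∈ saturation L₂.toAddSubgroup)
    (hq₁ : (QuotientAddGroup.mk
        (s := saturation L₁.toAddSubgroup ⊓ saturation L₂.toAddSubgroup) u₁) ≠ 0)
    (hq₂ : (QuotientAddGroup.mk
        (s := saturation L₁.toAddSubgroup ⊓ saturation L₂.toAddSubgroup) u₂) ≠ 0)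
    (b : Module.Basis (Fin 2) ℤ
        (M ⧸ (saturation L₁.toAddSubgroup ⊓ saturation L₂.toAddSubgroup))) :
    (saturation L₁.toAddSubgroup ⊔ saturation L₂.toAddSubgroup).index *
      (divisib (QuotientAddGroup.mk
          (s := saturation L₁.toAddSubgroup ⊓ saturation L₂.toAddSubgroup) u₁) *
       divisib (QuotientAddGroup.mk
          (s := saturation L₁.toAddSubgroup ⊓ saturation L₂.toAddSubgroup) u₂)) =
    (b.repr (QuotientAddGroup.mk u₁) 0 * b.repr (QuotientAddGroup.mk u₂) 1 -
     b.repr (QuotientAddGroup.mk u₁) 1 * b.repr (QuotientAddGroup.mk u₂) 0).natAbs := by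
  let e := b.equivFun.toAddEquiv
  let f : M →+ (Fin 2 → ℤ) := e.toAddMonoidHom.comp (QuotientAddGroup.mk' _)
  have hf : Function.Surjective f := e.surjective.comp (QuotientAddGroup.mk'_surjective _)
  have hker : f.ker = saturation L₁.toAddSubgroup ⊓ saturation L₂.toAddSubgroup := by
    ext m
    simp [f]
  have key := index_sup_mul_divisib_mul_divisib_of_ker_eq hf (saturation_saturation_le _)
    (saturation_saturation_le _) hker hu₁ hu₂ (e.map_ne_zero_iff.2 hq₁) (e.map_ne_zero_iff.2 hq₂)
  have hdivisib : ∀ u, divisib (f u) = divisib (QuotientAddGroup.mk u : M ⧸ _) :=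
    fun u => divisib_addEquiv e _
  rw [hdivisib, hdivisib] at key
  exact key

/-- let `M` be free abelian of rank `d`, `L₁, L₂ ⊆ M` of rank `d−1` with
`rank(L₁+L₂) = d`.  With `M̄ = M/(L₁ˢᵃᵗ ∩ L₂ˢᵃᵗ)` free of rank 2, and nonzero elements
`ū₁, ū₂ ∈ M̄` lying in the images of `L₁ˢᵃᵗ` and `L₂ˢᵃᵗ` respectively, one has
`|M/(L₁ˢᵃᵗ + L₂ˢᵃᵗ)| = |ū₁ ∧ ū₂| / (|ū₁| · |ū₂|)` (stated multiplicatively), where the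
determinant `ū₁ ∧ ū₂` is computed in any `ℤ`-basis of `M̄ ≅ ℤ²` and `|·|` denotes the
divisibility. -/
theorem stmt8 (M : Type*) [AddCommGroup M] [Module ℤ M]
    [Module.Free ℤ M] [Module.Finite ℤ M]
    (d : ℕ) (hd : 2 ≤ d) (hrank : Module.finrank ℤ M = d)
    (L₁ L₂ : Submodule ℤ M)
    (h₁ : Module.finrank ℤ ↥L₁ = d - 1) (h₂ : Module.finrank ℤ ↥L₂ = d - 1)
    (hsum : Module.finrank ℤ ↥(L₁ ⊔ L₂) = d)
    (u₁ u₂ : M)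
    (hu₁ : u₁ ∈ saturation L₁.toAddSubgroup) (hu₂ : u₂ ∈ saturation L₂.toAddSubgroup)
    (hq₁ : (QuotientAddGroup.mk
        (s := saturation L₁.toAddSubgroup ⊓ saturation L₂.toAddSubgroup) u₁) ≠ 0)
    (hq₂ : (QuotientAddGroup.mk
        (s := saturation L₁.toAddSubgroup ⊓ saturation L₂.toAddSubgroup) u₂) ≠ 0)
    (b : Module.Basis (Fin 2) ℤ
        (M ⧸ (saturation L₁.toAddSubgroup ⊓ saturation L₂.toAddSubgroup))) :
    (saturation L₁.toAddSubgroup ⊔ saturation L₂.toAddSubgroup).index *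
      (divisib (QuotientAddGroup.mk
          (s := saturation L₁.toAddSubgroup ⊓ saturation L₂.toAddSubgroup) u₁) *
       divisib (QuotientAddGroup.mk
          (s := saturation L₁.toAddSubgroup ⊓ saturation L₂.toAddSubgroup) u₂)) =
    (b.repr (QuotientAddGroup.mk u₁) 0 * b.repr (QuotientAddGroup.mk u₂) 1 -
     b.repr (QuotientAddGroup.mk u₁) 1 * b.repr (QuotientAddGroup.mk u₂) 0).natAbs :=
  stmt8_general M L₁ L₂ u₁ u₂ hu₁ hu₂ hq₁ hq₂ b
end

section
/- Let P be a k-dimensional convex polyhedron in ℝⁿ. Then there exists a finite polyhedral decomposition 𝒫 of ℝⁿ (a finite covering by strongly convex polyhedra such that faces of cells are cells and intersections of two cells are common faces) such that P is a union of k-dimensional cells of 𝒫. -/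
open Set

/-- A (convex) polyhedron in `ℝⁿ`: an intersection of finitely many affine half-spaces. -/
def IsPolyhedron {n : ℕ} (P : Set (Fin n → ℝ)) : Prop :=
  ∃ (k : ℕ) (f : Fin k → ((Fin n → ℝ) →ₗ[ℝ] ℝ)) (c : Fin k → ℝ),
    P = {x | ∀ i, f i x ≤ c i}

/-- `F` is a face of `P`: the locus where an affine functional bounded above on `P`
attains its maximum value. -/
def IsFaceOf {n : ℕ} (F P : Set (Fin n → ℝ)) : Prop :=
  ∃ (f : (Fin n → ℝ) →ₗ[ℝ] ℝ) (c : ℝ), (∀ x ∈ P, f x ≤ c) ∧ F = {x ∈ P | f x = c}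

/-- A strongly convex set: one containing no affine line. -/
def StronglyConvex {n : ℕ} (P : Set (Fin n → ℝ)) : Prop :=
  ∀ x v : Fin n → ℝ, v ≠ 0 → ¬ (∀ t : ℝ, x + t • v ∈ P)

/-- The dimension of a subset of `ℝⁿ`: the dimension of the direction of its affine span. -/
noncomputable def polyDim {n : ℕ} (P : Set (Fin n → ℝ)) : ℕ :=
  Module.finrank ℝ (affineSpan ℝ P).direction


/-!
Take the cells of the hyperplane arrangement formed by the facet hyperplanes of `P` together with
the coordinate hyperplanes; the coordinate hyperplanes make every cell strongly convex. A nonempty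
face of a cell is the cell of any of its points lying on as few hyperplanes as possible, and the
intersection of the cells with sign vectors `σ` and `τ` is the face of the first one cut out by
the functional `∑ i, (τ i - σ i) * (A i x - b i)`. Every `x ∈ P` lies in the cell of the point `z`
obtained by moving `x` slightly towards a point of `P` in general position. Since `P` is cut out by
hyperplanes of the arrangement, this cell lies in `P`; since `z` lies only on the hyperplanes
containing `P`, it has the dimension of `P`.
-/

open Filter Topology

section Generic

variable {E : Type*} [AddCommGroup E] [Module ℝ E]

lemma LinearMap.subsingleton_setOf_apply_add_smul_eq (g : E →ₗ[ℝ] ℝ) {y v : E} {d : ℝ}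
    (hy : g y ≠ d) : {t : ℝ | g (y + t • v) = d}.Subsingleton := by
  intro t ht t' ht'
  simp only [mem_ofPred_eq, map_add, map_smul, smul_eq_mul] at ht ht'
  have hv : g v ≠ 0 := fun hv => hy (by simpa [hv] using ht)
  exact mul_right_cancel₀ hv (by linarith)

theorem Convex.exists_forall_apply_ne {P : Set E} (hP : Convex ℝ P) (hne : P.Nonempty)
    {κ : Type*} [Finite κ] (g : κ → E →ₗ[ℝ] ℝ) (d : κ → ℝ) :
    ∃ y ∈ P, ∀ i, (∃ p ∈ P, g i p ≠ d i) → g i y ≠ d i := by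
  classical
  have := Fintype.ofFinite κ
  suffices ∀ s : Finset κ, ∃ y ∈ P, ∀ i ∈ s, (∃ p ∈ P, g i p ≠ d i) → g i y ≠ d i by
    simpa using this Finset.univ
  intro s
  induction s using Finset.induction_on with
  | empty => exact ⟨_, hne.some_mem, by simp⟩
  | insert i₀ s _ ih =>
    obtain ⟨y, hyP, hy⟩ := ih
    by_cases hgood : g i₀ y ≠ d i₀ ∨ ∀ p ∈ P, g i₀ p = d i₀
    · refine ⟨y, hyP, (Finset.forall_mem_insert _ _ _).2 ⟨fun hwit => ?_, hy⟩⟩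
      obtain ⟨p, hp, hpne⟩ := hwit
      exact hgood.resolve_right fun h => hpne (h p hp)
    push Not at hgood
    obtain ⟨hyi₀, p, hpP, hpi₀⟩ := hgood
    -- move from `y` towards `p`, avoiding the finitely many parameters where some `g i` hits `d i`
    set bad := ⋃ i ∈ s, {t : ℝ | g i y ≠ d i ∧ g i (y + t • (p - y)) = d i}
    have hbad : bad.Finite := s.finite_toSet.biUnion fun i _ => Subsingleton.finite
      fun t ht t' ht' => (g i).subsingleton_setOf_apply_add_smul_eq ht.1 ht.2 ht'.2
    obtain ⟨t, ⟨ht₀, ht₁⟩, htbad⟩ := (Ioo_infinite (zero_lt_one' ℝ)).sdiff hbad |>.nonempty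
    refine ⟨y + t • (p - y), hP.add_smul_sub_mem hyP hpP ⟨ht₀.le, ht₁.le⟩,
      (Finset.forall_mem_insert _ _ _).2 ⟨fun _ h => ?_, fun i hi hwit h => ?_⟩⟩
    · simp only [map_add, map_smul, map_sub, smul_eq_mul, hyi₀] at h
      have : t * (g i₀ p - d i₀) = 0 := by linarith
      exact hpi₀ (sub_eq_zero.1 ((mul_eq_zero.1 this).resolve_left ht₀.ne'))
    · exact htbad (mem_biUnion hi ⟨hy i hi hwit, h⟩)

lemma LinearMap.apply_eq_zero_of_mem_direction_affineSpan (g : E →ₗ[ℝ] ℝ) {S : Set E} {d : ℝ}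
    (hS : ∀ p ∈ S, g p = d) {v : E} (hv : v ∈ (affineSpan ℝ S).direction) : g v = 0 := by
  rw [direction_affineSpan, vectorSpan_def] at hv
  refine LinearMap.mem_ker.1 (Submodule.span_le.2 ?_ hv)
  rintro _ ⟨p, hp, q, hq, rfl⟩
  simp [hS p hp, hS q hq]

lemma mem_direction_affineSpan_of_add_smul_mem {S : Set E} {z v : E} {t : ℝ} (ht : t ≠ 0)
    (hz : z ∈ S) (hzv : z + t • v ∈ S) : v ∈ (affineSpan ℝ S).direction := by
  have := AffineSubspace.vsub_mem_direction (mem_affineSpan ℝ hzv) (mem_affineSpan ℝ hz)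
  rwa [vsub_eq_sub, add_sub_cancel_left, Submodule.smul_mem_iff _ ht] at this

end Generic

lemma forall_signType_mul_le_iff (s : SignType) (a : ℝ) :
    (∀ e : SignType, (e : ℝ) * a ≤ s * a) ↔ (a ≠ 0 → SignType.sign a = s) := by
  constructor
  · intro h ha
    have h₁ := h 1
    have h₂ := h (-1)
    rcases ha.lt_or_gt with ha | ha <;> cases s <;> simp [sign_neg, sign_pos, ha] at h₁ h₂ ⊢ <;>
      linarith
  · intro h e
    rcases eq_or_ne a 0 with rfl | ha
    · simp
    · rw [← h ha, sign_mul_self]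
      calc (e : ℝ) * a ≤ |(e : ℝ) * a| := le_abs_self _
        _ ≤ |a| := by
          rw [abs_mul]
          exact mul_le_of_le_one_left (abs_nonneg a) (by cases e <;> simp)

section Polyhedra

variable {n : ℕ}

lemma isPolyhedron_setOf_forall_le {κ : Type*} [Finite κ] (g : κ → (Fin n → ℝ) →ₗ[ℝ] ℝ)
    (d : κ → ℝ) : IsPolyhedron {x | ∀ j, g j x ≤ d j} := by
  obtain ⟨m, ⟨e⟩⟩ := Finite.exists_equiv_fin κ
  refine ⟨m, g ∘ e.symm, d ∘ e.symm, ?_⟩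
  ext x
  simp [e.symm.forall_congr_left]

lemma IsPolyhedron.convex {P : Set (Fin n → ℝ)} (hP : IsPolyhedron P) : Convex ℝ P := by
  obtain ⟨k, f, c, rfl⟩ := hP
  simpa only [ofPred_forall] using convex_iInter fun i => convex_halfSpace_le (f i).isLinear (c i)

lemma isPolyhedron_empty : IsPolyhedron (∅ : Set (Fin n → ℝ)) :=
  ⟨1, fun _ => 0, fun _ => -1, by ext; simp⟩

lemma isFaceOf_self (Q : Set (Fin n → ℝ)) : IsFaceOf Q Q :=
  ⟨0, 0, fun _ _ => le_rfl, by simp⟩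

lemma isFaceOf_empty (Q : Set (Fin n → ℝ)) : IsFaceOf ∅ Q :=
  ⟨0, 1, fun _ _ => zero_le_one, by simp⟩

lemma isFaceOf_setOf_forall_eq {ι : Type*} [Finite ι] {Q : Set (Fin n → ℝ)}
    (g : ι → (Fin n → ℝ) →ₗ[ℝ] ℝ) (d : ι → ℝ) (h : ∀ x ∈ Q, ∀ i, g i x ≤ d i) :
    IsFaceOf {x ∈ Q | ∀ i, g i x = d i} Q := by
  have := Fintype.ofFinite ι
  refine ⟨∑ i, g i, ∑ i, d i, fun x hx => ?_, ?_⟩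
  · simpa using Finset.sum_le_sum fun i _ => h x hx i
  · ext x
    simp only [mem_ofPred_eq, LinearMap.sum_apply]
    refine and_congr_right fun hx => ?_
    rw [Finset.sum_eq_sum_iff_of_le fun i _ => h x hx i]
    simp

lemma polyDim_mono {P Q : Set (Fin n → ℝ)} (h : P ⊆ Q) : polyDim P ≤ polyDim Q :=
  Submodule.finrank_mono (AffineSubspace.direction_le (affineSpan_mono ℝ h))

def IsPolyhedralDecomposition (Pd : Set (Set (Fin n → ℝ))) : Prop :=
  Pd.Finite ∧ (∀ Q ∈ Pd, IsPolyhedron Q ∧ StronglyConvex Q) ∧ ⋃₀ Pd = univ ∧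
    (∀ Q ∈ Pd, ∀ F, IsFaceOf F Q → F ∈ Pd) ∧
    (∀ Q ∈ Pd, ∀ Q' ∈ Pd, IsFaceOf (Q ∩ Q') Q ∧ IsFaceOf (Q ∩ Q') Q')

end Polyhedra

section Arrangement

variable {n : ℕ} {ι : Type*} (A : ι → (Fin n → ℝ) →ₗ[ℝ] ℝ) (b : ι → ℝ)

/-- `σ i` maximises `e ↦ e * (A i x - b i)` over signs `e` iff `A i x - b i` vanishes or has
sign `σ i`; this form exhibits the closed cell as an intersection of half-spaces. -/
def arrangementCell (σ : ι → SignType) : Set (Fin n → ℝ) :=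
  {x | ∀ i (e : SignType), (e : ℝ) * (A i x - b i) ≤ σ i * (A i x - b i)}

noncomputable def signVector (x : Fin n → ℝ) (i : ι) : SignType :=
  SignType.sign (A i x - b i)

def arrangementCells : Set (Set (Fin n → ℝ)) :=
  insert ∅ (range (arrangementCell A b))

variable {A b}

lemma mem_arrangementCell_iff {σ : ι → SignType} {x : Fin n → ℝ} :
    x ∈ arrangementCell A b σ ↔ ∀ i, A i x ≠ b i → signVector A b x i = σ i := by
  refine forall_congr' fun i => (forall_signType_mul_le_iff _ _).trans ?_
  rw [sub_ne_zero]
  rfl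

lemma mem_arrangementCell_signVector (x : Fin n → ℝ) :
    x ∈ arrangementCell A b (signVector A b x) :=
  mem_arrangementCell_iff.2 fun _ _ => rfl

lemma apply_eq_of_mem_arrangementCell_signVector {x y : Fin n → ℝ} {i : ι}
    (hx : x ∈ arrangementCell A b (signVector A b y)) (hy : A i y = b i) : A i x = b i := by
  by_contra hne
  have := mem_arrangementCell_iff.1 hx i hne
  simp [signVector, hy, sub_eq_zero, hne] at this

lemma arrangementCell_signVector_subset {σ : ι → SignType} {y : Fin n → ℝ}
    (hy : y ∈ arrangementCell A b σ) :
    arrangementCell A b (signVector A b y) ⊆ arrangementCell A b σ := by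
  intro x hx
  refine mem_arrangementCell_iff.2 fun i hi => ?_
  rw [mem_arrangementCell_iff.1 hx i hi]
  exact mem_arrangementCell_iff.1 hy i fun h => hi (apply_eq_of_mem_arrangementCell_signVector hx h)

lemma isPolyhedron_arrangementCell [Finite ι] (σ : ι → SignType) :
    IsPolyhedron (arrangementCell A b σ) := by
  convert isPolyhedron_setOf_forall_le (fun p : ι × SignType => ((p.2 : ℝ) - σ p.1) • A p.1)
    (fun p => ((p.2 : ℝ) - σ p.1) * b p.1) using 1
  ext x
  simp only [arrangementCell, mem_ofPred_eq, Prod.forall, LinearMap.smul_apply, smul_eq_mul]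
  refine forall₂_congr fun i e => ?_
  constructor <;> intro h <;> linarith

lemma stronglyConvex_arrangementCell (hA : ∀ v, (∀ i, A i v = 0) → v = 0) (σ : ι → SignType) :
    StronglyConvex (arrangementCell A b σ) := by
  intro x v hv hline
  obtain ⟨i, hi⟩ : ∃ i, A i v ≠ 0 := by
    by_contra! h
    exact hv (hA v h)
  have hcross : ∀ s : ℝ, ∀ e : SignType, (e : ℝ) * s ≤ σ i * s := fun s e => by
    have := hline ((s + b i - A i x) / A i v) i e
    simpa [div_mul_cancel₀ _ hi] using this
  have h₁ := hcross 1 1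
  have h₂ := hcross (-1) (-1)
  simp only [SignType.coe_one, SignType.coe_neg, mul_one, mul_neg] at h₁ h₂
  linarith

lemma isFaceOf_arrangementCell_inter [Finite ι] (σ τ : ι → SignType) :
    IsFaceOf (arrangementCell A b σ ∩ arrangementCell A b τ) (arrangementCell A b σ) := by
  convert isFaceOf_setOf_forall_eq (fun i => ((τ i : ℝ) - σ i) • A i)
    (fun i => ((τ i : ℝ) - σ i) * b i) fun x hx i => ?_ using 1
  · ext x
    simp only [arrangementCell, mem_inter_iff, mem_ofPred_eq, LinearMap.smul_apply, smul_eq_mul]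
    refine and_congr_right fun hσ => ⟨fun hτ i => ?_, fun h i e => ?_⟩
    · linarith [hσ i (τ i), hτ i (σ i)]
    · linarith [hσ i e, h i]
  · have := hx i (τ i)
    simp only [LinearMap.smul_apply, smul_eq_mul]
    linarith

lemma eventually_signVector_eq [Finite ι] (z : Fin n → ℝ) :
    ∀ᶠ x in 𝓝 z, ∀ i, A i z ≠ b i → signVector A b x i = signVector A b z i := by
  refine eventually_all.2 fun i => ?_
  rcases eq_or_ne (A i z) (b i) with hi | hi
  · exact .of_forall fun _ h => (h hi).elim
  have hcont : ContinuousAt (fun x => signVector A b x i) z :=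
    (continuousAt_sign_of_ne_zero (sub_ne_zero.2 hi)).comp (f := fun x => A i x - b i)
      ((A i).continuous_of_finiteDimensional.sub continuous_const).continuousAt
  filter_upwards [hcont.eventually_mem ((isOpen_discrete {signVector A b z i}).mem_nhds rfl)]
    with x hx _ using hx

lemma eventually_add_smul_mem_arrangementCell_signVector [Finite ι] {z v : Fin n → ℝ}
    (hv : ∀ i, A i z = b i → A i v = 0) :
    ∀ᶠ t in 𝓝 (0 : ℝ), z + t • v ∈ arrangementCell A b (signVector A b z) := by
  have hline : Tendsto (fun t : ℝ => z + t • v) (𝓝 0) (𝓝 z) :=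
    ((continuous_const.add (continuous_id.smul continuous_const)).tendsto' _ _ (by simp))
  filter_upwards [hline.eventually (eventually_signVector_eq (A := A) (b := b) z)] with t ht
  refine mem_arrangementCell_iff.2 fun i hi => ht i fun hz => hi ?_
  simp [hz, hv i hz]

lemma exists_pos_add_smul_mem_arrangementCell_signVector [Finite ι] {z v : Fin n → ℝ}
    (hv : ∀ i, A i z = b i → A i v = 0) :
    ∃ t > (0 : ℝ), z + t • v ∈ arrangementCell A b (signVector A b z) := by
  obtain ⟨t, hmem, ht⟩ := ((eventually_add_smul_mem_arrangementCell_signVector hv).filter_mono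
    nhdsWithin_le_nhds |>.and (self_mem_nhdsWithin : Ioi (0 : ℝ) ∈ 𝓝[>] 0)).exists
  exact ⟨t, ht, hmem⟩

lemma exists_eq_arrangementCell_of_isFaceOf [Finite ι] {σ : ι → SignType} {F : Set (Fin n → ℝ)}
    (hF : IsFaceOf F (arrangementCell A b σ)) (hne : F.Nonempty) :
    ∃ τ, F = arrangementCell A b τ := by
  obtain ⟨f, c, hfc, rfl⟩ := hF
  have hconv : Convex ℝ {x ∈ arrangementCell A b σ | f x = c} :=
    (isPolyhedron_arrangementCell σ).convex.inter (convex_hyperplane f.isLinear c)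
  obtain ⟨y, ⟨hyσ, hyc⟩, hy⟩ := hconv.exists_forall_apply_ne hne A b
  refine ⟨signVector A b y, subset_antisymm ?_ fun x hx => ?_⟩
  · rintro x ⟨hxσ, hxc⟩
    refine mem_arrangementCell_iff.2 fun i hi => ?_
    rw [mem_arrangementCell_iff.1 hxσ i hi,
      mem_arrangementCell_iff.1 hyσ i (hy i ⟨x, ⟨hxσ, hxc⟩, hi⟩)]
  have hxσ := arrangementCell_signVector_subset hyσ hx
  -- the face contains a point beyond `y` on the line from `x` through `y`, forcing `f x = c`
  obtain ⟨t, ht, hmem⟩ := exists_pos_add_smul_mem_arrangementCell_signVector (A := A) (b := b)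
    (z := y) (v := y - x) fun i hi => by
      rw [map_sub, hi, apply_eq_of_mem_arrangementCell_signVector hx hi, sub_self]
  have hle := hfc _ (arrangementCell_signVector_subset hyσ hmem)
  simp only [map_add, map_smul, map_sub, smul_eq_mul, hyc] at hle
  exact ⟨hxσ, le_antisymm (hfc x hxσ) (by nlinarith)⟩

theorem isPolyhedralDecomposition_arrangementCells [Finite ι]
    (hA : ∀ v, (∀ i, A i v = 0) → v = 0) : IsPolyhedralDecomposition (arrangementCells A b) := by
  refine ⟨(finite_range _).insert ∅, ?_, ?_, ?_, ?_⟩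
  · rintro Q (rfl | ⟨σ, rfl⟩)
    · exact ⟨isPolyhedron_empty, fun _ _ _ h => h 0⟩
    · exact ⟨isPolyhedron_arrangementCell σ, stronglyConvex_arrangementCell hA σ⟩
  · exact eq_univ_of_forall fun x =>
      ⟨_, Or.inr ⟨signVector A b x, rfl⟩, mem_arrangementCell_signVector x⟩
  · rintro Q (rfl | ⟨σ, rfl⟩) F hF
    · obtain ⟨f, c, -, rfl⟩ := hF
      exact Or.inl (by simp)
    · rcases F.eq_empty_or_nonempty with rfl | hne
      · exact Or.inl rfl
      · obtain ⟨τ, rfl⟩ := exists_eq_arrangementCell_of_isFaceOf hF hne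
        exact Or.inr ⟨τ, rfl⟩
  · rintro Q (rfl | ⟨σ, rfl⟩) Q' hQ'
    · rw [empty_inter]
      exact ⟨isFaceOf_self _, isFaceOf_empty _⟩
    rcases hQ' with rfl | ⟨τ, rfl⟩
    · rw [inter_empty]
      exact ⟨isFaceOf_empty _, isFaceOf_self _⟩
    · exact ⟨isFaceOf_arrangementCell_inter σ τ,
        inter_comm (arrangementCell A b τ) _ ▸ isFaceOf_arrangementCell_inter τ σ⟩

lemma arrangementCell_signVector_subset_setOf_le {κ : Type*} (e : κ → ι) {z : Fin n → ℝ}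
    (hz : ∀ j, A (e j) z ≤ b (e j)) :
    arrangementCell A b (signVector A b z) ⊆ {x | ∀ j, A (e j) x ≤ b (e j)} := by
  intro x hx j
  by_contra! h
  have := mem_arrangementCell_iff.1 hx (e j) h.ne'
  rw [signVector, sign_pos (sub_pos.2 h)] at this
  exact (hz j).not_gt (sub_pos.1 (sign_eq_one_iff.1 this.symm))

lemma direction_affineSpan_le_arrangementCell_signVector [Finite ι] {P : Set (Fin n → ℝ)}
    {z : Fin n → ℝ} (hz : ∀ i, A i z = b i → ∀ p ∈ P, A i p = b i) :
    (affineSpan ℝ P).direction ≤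
      (affineSpan ℝ (arrangementCell A b (signVector A b z))).direction := by
  intro v hv
  obtain ⟨s, hs, hmem⟩ := exists_pos_add_smul_mem_arrangementCell_signVector (A := A) (b := b)
    (z := z) (v := v) fun i hi => (A i).apply_eq_zero_of_mem_direction_affineSpan (hz i hi) hv
  exact mem_direction_affineSpan_of_add_smul_mem hs.ne' (mem_arrangementCell_signVector z) hmem

theorem exists_arrangementCell_subset_polyDim_eq [Finite ι] {P : Set (Fin n → ℝ)}
    (hP : Convex ℝ P) (hPcells : ∀ z ∈ P, arrangementCell A b (signVector A b z) ⊆ P)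
    {x : Fin n → ℝ} (hx : x ∈ P) :
    ∃ σ, x ∈ arrangementCell A b σ ∧ arrangementCell A b σ ⊆ P ∧
      polyDim (arrangementCell A b σ) = polyDim P := by
  obtain ⟨y, hyP, hy⟩ := hP.exists_forall_apply_ne ⟨x, hx⟩ A b
  have hline : Tendsto (fun t : ℝ => x + t • (y - x)) (𝓝[>] 0) (𝓝 x) :=
    ((continuous_const.add (continuous_id.smul continuous_const)).tendsto' _ _
      (by simp)).mono_left nhdsWithin_le_nhds
  obtain ⟨t, hsign, ht⟩ := (hline.eventually (eventually_signVector_eq (A := A) (b := b) x)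
    |>.and (Ioo_mem_nhdsGT one_pos)).exists
  set z := x + t • (y - x)
  have hzP : z ∈ P := hP.add_smul_sub_mem hx hyP ⟨ht.1.le, ht.2.le⟩
  have hz : ∀ i, A i z = b i → ∀ p ∈ P, A i p = b i := by
    intro i hzi
    by_contra! hwit
    have hxi : A i x = b i := by
      by_contra hxi
      have := hsign i hxi
      rw [signVector, hzi, sub_self, sign_zero, eq_comm, signVector, sign_eq_zero_iff,
        sub_eq_zero] at this
      exact hxi this
    have hzi' : A i z - b i = t * (A i y - b i) := by
      simp only [z, map_add, map_smul, map_sub, smul_eq_mul, hxi]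
      ring
    rw [hzi, sub_self, eq_comm, mul_eq_zero, sub_eq_zero] at hzi'
    exact hy i hwit (hzi'.resolve_left ht.1.ne')
  exact ⟨signVector A b z, mem_arrangementCell_iff.2 fun i hi => (hsign i hi).symm,
    hPcells z hzP, le_antisymm (polyDim_mono (hPcells z hzP))
      (Submodule.finrank_mono (direction_affineSpan_le_arrangementCell_signVector hz))⟩

end Arrangement

/-- every `k`-dimensional convex polyhedron `P ⊆ ℝⁿ` is a union of
`k`-dimensional cells of some finite polyhedral decomposition `Pd` of `ℝⁿ` (a finite
covering of `ℝⁿ` by strongly convex polyhedra such that every face of a cell is a cell,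
and the intersection of any two cells is a common face of both). -/
theorem stmt12 (n k : ℕ) (P : Set (Fin n → ℝ))
    (hP : IsPolyhedron P) (hPne : P.Nonempty) (hdim : polyDim P = k) :
    ∃ Pd : Set (Set (Fin n → ℝ)), Pd.Finite ∧
      (∀ Q ∈ Pd, IsPolyhedron Q ∧ StronglyConvex Q) ∧
      ⋃₀ Pd = Set.univ ∧
      (∀ Q ∈ Pd, ∀ F : Set (Fin n → ℝ), IsFaceOf F Q → F ∈ Pd) ∧
      (∀ Q ∈ Pd, ∀ Q' ∈ Pd, IsFaceOf (Q ∩ Q') Q ∧ IsFaceOf (Q ∩ Q') Q') ∧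
      (∃ S ⊆ Pd, (∀ Q ∈ S, polyDim Q = k) ∧ P = ⋃₀ S) := by
  obtain ⟨m, f, c, rfl⟩ := hP
  set A : Fin m ⊕ Fin n → (Fin n → ℝ) →ₗ[ℝ] ℝ := Sum.elim f LinearMap.proj
  set b : Fin m ⊕ Fin n → ℝ := Sum.elim c 0
  obtain ⟨hfin, hcells, hcover, hfaces, hinter⟩ :=
    isPolyhedralDecomposition_arrangementCells (A := A) (b := b) fun v hv =>
      funext fun j => hv (.inr j)
  refine ⟨_, hfin, hcells, hcover, hfaces, hinter,
    {Q ∈ arrangementCells A b | Q ⊆ _ ∧ polyDim Q = k}, sep_subset _ _, fun Q hQ => hQ.2.2,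
    subset_antisymm (fun x hx => ?_) (sUnion_subset fun Q hQ => hQ.2.1)⟩
  obtain ⟨σ, hxσ, hσP, hσdim⟩ := exists_arrangementCell_subset_polyDim_eq
    (isPolyhedron_setOf_forall_le f c).convex
    (fun z hz => arrangementCell_signVector_subset_setOf_le (A := A) (b := b) Sum.inl hz) hx
  exact ⟨_, ⟨Or.inr ⟨σ, rfl⟩, hσP, hσdim.trans hdim⟩, hxσ⟩
end
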